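/- Let (X,d) be a proper geodesic metric space and let ν be a Borel measure on X whose support is all of X and which is finite on bounded sets, satisfying the Bishop–Gromov inequality with parameters (K,N), where K ≤ 0 and 1 < N < ∞. Suppose the non-collapsing condition holds: there exist r₀, V₀, V₁ > 0 with V₀ ≤ ν(B(x,r₀)) ≤ V₁ for all x ∈ X. Let ε > 0, let 𝒩 be a maximal ε-separated net in X with discretization graph G(𝒩), and fix basepoints x₀ ∈ X and p₀ ∈ 𝒩. Then (X,d,ν) has exponential volume growth if and only if G(𝒩) has exponential growth. -/

import Mathlib

open MeasureTheory Metric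

/-- The model volume density `S_K^N` for `K ≤ 0`, `1 < N < ∞`. -/
noncomputable def SKN (K N t : ℝ) : ℝ :=
  if K = 0 then t ^ (N - 1)
  else Real.sinh (Real.sqrt (|K| / (N - 1)) * t) ^ (N - 1)

/-- A Borel measure `ν` of full support satisfies the Bishop–Gromov inequality with
parameters `(K, N)` if for every `x` the function
`r ↦ ν(B(x,r)) / ∫₀^r S_K^N(t) dt` is nonincreasing on `(0, ∞)`. -/
def BishopGromov {X : Type*} [MetricSpace X] [MeasurableSpace X]
    (ν : Measure X) (K N : ℝ) : Prop :=
  ∀ x : X, AntitoneOn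
    (fun r => (ν (ball x r)).toReal / ∫ t in (0:ℝ)..r, SKN K N t) (Set.Ioi 0)

/-- A metric space is geodesic if every pair of points is joined by a geodesic
(an isometric image of a real interval). -/
def IsGeodesicSpace (X : Type*) [MetricSpace X] : Prop :=
  ∀ x y : X, ∃ f : ℝ → X, f 0 = x ∧ f (dist x y) = y ∧
    ∀ s ∈ Set.Icc (0:ℝ) (dist x y), ∀ t ∈ Set.Icc (0:ℝ) (dist x y),
      dist (f s) (f t) = |s - t|

/-- A subset `𝒩` of a metric space is `ε`-separated if distinct points of `𝒩` are at
distance at least `ε`. -/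
def IsSeparated {X : Type*} [MetricSpace X] (𝒩 : Set X) (ε : ℝ) : Prop :=
  ∀ p ∈ 𝒩, ∀ q ∈ 𝒩, p ≠ q → ε ≤ dist p q

/-- A maximal `ε`-separated net: an `ε`-separated set maximal with respect to inclusion. -/
def IsMaximalNet {X : Type*} [MetricSpace X] (𝒩 : Set X) (ε : ℝ) : Prop :=
  IsSeparated 𝒩 ε ∧ ∀ M : Set X, 𝒩 ⊆ M → IsSeparated M ε → M = 𝒩

/-- The discretization graph `G(𝒩)`: vertices are points of `𝒩`, and distinct `p, q`
are adjacent iff `B(p,ε) ∩ B(q,ε) ≠ ∅`, equivalently `dist p q < 2ε`. -/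
def netGraph {X : Type*} [MetricSpace X] (𝒩 : Set X) (ε : ℝ) : SimpleGraph 𝒩 where
  Adj p q := p ≠ q ∧ dist (p : X) (q : X) < 2 * ε
  symm := by
    constructor
    intro p q h
    exact ⟨h.1.symm, by rw [dist_comm]; exact h.2⟩
  loopless := by
    constructor
    intro p h
    exact h.1 rfl

/-- A connected graph with basepoint `v₀` has polynomial growth if the cardinality of
combinatorial balls is eventually bounded by `C·r^k`. -/
def GraphPolyGrowth {V : Type*} (G : SimpleGraph V) (v₀ : V) : Prop :=
  ∃ C > (0:ℝ), ∃ k > (0:ℝ), ∃ r₁ > (0:ℝ), ∀ r : ℝ, r₁ ≤ r →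
    (({v : V | (G.dist v₀ v : ℝ) ≤ r}.ncard : ℝ)) ≤ C * r ^ k

/-- A connected graph with basepoint `v₀` has exponential growth if
`limsup_{r→∞} (1/r)·log #{v : 𝐝(v₀,v) ≤ r} > 0`. -/
def GraphExpGrowth {V : Type*} (G : SimpleGraph V) (v₀ : V) : Prop :=
  0 < Filter.limsup
    (fun r : ℝ => Real.log (({v : V | (G.dist v₀ v : ℝ) ≤ r}.ncard : ℝ)) / r)
    Filter.atTop

/-- A metric measure space with basepoint `x₀` has polynomial volume growth if
`ν(B(x₀,r)) ≤ C·r^k` for all sufficiently large `r`. -/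
def VolumePolyGrowth {X : Type*} [MetricSpace X] [MeasurableSpace X]
    (ν : Measure X) (x₀ : X) : Prop :=
  ∃ C > (0:ℝ), ∃ k > (0:ℝ), ∃ r₁ > (0:ℝ), ∀ r : ℝ, r₁ ≤ r →
    (ν (ball x₀ r)).toReal ≤ C * r ^ k

/-- A metric measure space with basepoint `x₀` has exponential volume growth if
`limsup_{r→∞} (1/r)·log ν(B(x₀,r)) > 0`. -/
def VolumeExpGrowth {X : Type*} [MetricSpace X] [MeasurableSpace X]
    (ν : Measure X) (x₀ : X) : Prop :=
  0 < Filter.limsup (fun r : ℝ => Real.log (ν (ball x₀ r)).toReal / r) Filter.atTop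

/-!
A maximal `ε`-separated net is `ε`-dense, so the balls `B(p, ε)`, `p ∈ 𝒩`, cover `X`, while the
balls `B(p, ε/2)` are pairwise disjoint. Bishop–Gromov together with the non-collapsing condition
bounds the volume of balls of a fixed radius uniformly from below, and the volume of all balls
by `C e^{cR}`. Counting net points then compares `ν(B(x₀, r))` with the number of net points in a
ball of comparable radius. Since `X` is geodesic, chains of adjacent net points can follow
geodesics, so the graph metric and `d` agree on `𝒩` up to an affine distortion. Each growth
function is therefore bounded by a multiple of the other at an affinely rescaled radius, and
positivity of the exponential growth rate transfers in both directions.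
-/

open Filter Real

section ModelVolume

variable {K N : ℝ}

lemma SKN_pos (hN : 1 < N) {t : ℝ} (ht : 0 < t) : 0 < SKN K N t := by
  unfold SKN
  split_ifs with hK
  · exact rpow_pos_of_pos ht _
  · refine rpow_pos_of_pos (sinh_pos_iff.2 (mul_pos ?_ ht)) _
    exact sqrt_pos.2 (div_pos (abs_pos.2 hK) (by linarith))

lemma SKN_monotoneOn (hN : 1 < N) : MonotoneOn (SKN K N) (Set.Ici 0) := by
  intro a ha b _ hab
  unfold SKN
  split_ifs
  · exact rpow_le_rpow ha hab (by linarith)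
  · exact rpow_le_rpow (sinh_nonneg_iff.2 (mul_nonneg (sqrt_nonneg _) ha))
      (sinh_le_sinh.2 (mul_le_mul_of_nonneg_left hab (sqrt_nonneg _))) (by linarith)

lemma SKN_le_exp (hN : 1 < N) {t : ℝ} (ht : 0 ≤ t) :
    SKN K N t ≤ exp ((N - 1) * (1 + √(|K| / (N - 1))) * t) := by
  set κ := √(|K| / (N - 1))
  have hκ : 0 ≤ κ := sqrt_nonneg _
  have hpow : ∀ b, 0 ≤ b → b ≤ exp ((1 + κ) * t) →
      b ^ (N - 1) ≤ exp ((N - 1) * (1 + κ) * t) := fun b hb hbt =>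
    calc b ^ (N - 1) ≤ exp ((1 + κ) * t) ^ (N - 1) := rpow_le_rpow hb hbt (by linarith)
      _ = exp ((N - 1) * (1 + κ) * t) := by rw [← exp_mul]; ring_nf
  unfold SKN
  split_ifs
  · exact hpow t ht ((show t ≤ exp t by linarith [add_one_le_exp t]).trans
      (exp_le_exp.2 (by nlinarith)))
  · refine hpow _ (sinh_nonneg_iff.2 (mul_nonneg hκ ht)) ((show sinh (κ * t) ≤ exp (κ * t) from
      ?_).trans (exp_le_exp.2 (by nlinarith)))
    rw [sinh_eq]
    linarith [exp_pos (-(κ * t)), exp_pos (κ * t)]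

lemma intervalIntegrable_SKN (hN : 1 < N) {t : ℝ} (ht : 0 ≤ t) :
    IntervalIntegrable (SKN K N) volume 0 t :=
  ((SKN_monotoneOn hN).mono (by rw [Set.uIcc_of_le ht]; exact Set.Icc_subset_Ici_self)
    ).intervalIntegrable

lemma integral_SKN_pos (hN : 1 < N) {t : ℝ} (ht : 0 < t) : 0 < ∫ s in (0 : ℝ)..t, SKN K N s :=
  intervalIntegral.intervalIntegral_pos_of_pos_on (intervalIntegrable_SKN hN ht.le)
    (fun _ hs => SKN_pos hN hs.1) ht

lemma exists_integral_SKN_le_exp (hN : 1 < N) :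
    ∃ c, 0 ≤ c ∧ ∀ t, 0 ≤ t → ∫ s in (0 : ℝ)..t, SKN K N s ≤ exp (c * t) := by
  set c₀ := (N - 1) * (1 + √(|K| / (N - 1)))
  have hc₀ : 0 ≤ c₀ := mul_nonneg (by linarith) (by positivity)
  refine ⟨c₀ + 1, by linarith, fun t ht => ?_⟩
  calc ∫ s in (0 : ℝ)..t, SKN K N s ≤ ∫ _ in (0 : ℝ)..t, exp (c₀ * t) :=
        intervalIntegral.integral_mono_on ht (intervalIntegrable_SKN hN ht) intervalIntegrable_const
          fun s hs => (SKN_le_exp hN hs.1).trans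
            (exp_le_exp.2 (mul_le_mul_of_nonneg_left hs.2 hc₀))
    _ = t * exp (c₀ * t) := by simp
    _ ≤ exp t * exp (c₀ * t) := by gcongr; linarith [add_one_le_exp t]
    _ = exp ((c₀ + 1) * t) := by rw [← exp_add]; ring_nf

end ModelVolume

section BishopGromov

variable {X : Type*} [MetricSpace X] [MeasurableSpace X] {ν : Measure X} {K N : ℝ}

lemma BishopGromov.measureReal_ball_mul_le (hBG : BishopGromov ν K N) (hN : 1 < N) (x : X)
    {s t : ℝ} (hs : 0 < s) (hst : s ≤ t) :
    ν.real (ball x t) * ∫ u in (0 : ℝ)..s, SKN K N u ≤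
      ν.real (ball x s) * ∫ u in (0 : ℝ)..t, SKN K N u := by
  have h := hBG x (Set.mem_Ioi.2 hs) (Set.mem_Ioi.2 (hs.trans_le hst)) hst
  rwa [div_le_div_iff₀ (integral_SKN_pos hN (hs.trans_le hst)) (integral_SKN_pos hN hs)] at h

lemma BishopGromov.exists_pos_le_measureReal_ball (hBG : BishopGromov ν K N) (hN : 1 < N)
    (hν : ∀ x r, ν (ball x r) ≠ ⊤) {r₀ V₀ : ℝ} (hr₀ : 0 < r₀) (hV₀ : 0 < V₀)
    (hlow : ∀ x, V₀ ≤ ν.real (ball x r₀)) {s : ℝ} (hs : 0 < s) :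
    ∃ v > 0, ∀ x, v ≤ ν.real (ball x s) := by
  set s' := min s r₀
  have hs' : 0 < s' := lt_min hs hr₀
  have hIs' := integral_SKN_pos (K := K) hN hs'
  have hIr₀ := integral_SKN_pos (K := K) hN hr₀
  refine ⟨V₀ * (∫ u in (0 : ℝ)..s', SKN K N u) / ∫ u in (0 : ℝ)..r₀, SKN K N u,
    by positivity, fun x => ?_⟩
  calc _ ≤ ν.real (ball x s') := by
        rw [div_le_iff₀ hIr₀]
        exact (mul_le_mul_of_nonneg_right (hlow x) hIs'.le).trans
          (hBG.measureReal_ball_mul_le hN x hs' (min_le_right _ _))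
    _ ≤ ν.real (ball x s) := measureReal_mono (ball_subset_ball (min_le_left _ _)) (hν x s)

lemma BishopGromov.exists_measureReal_ball_le_exp (hBG : BishopGromov ν K N) (hN : 1 < N)
    (hν : ∀ x r, ν (ball x r) ≠ ⊤) {r₀ V₁ : ℝ} (hr₀ : 0 < r₀) (hV₁ : 0 < V₁)
    (hup : ∀ x, ν.real (ball x r₀) ≤ V₁) :
    ∃ C > 0, ∃ c, ∀ x R, 0 ≤ R → ν.real (ball x R) ≤ C * exp (c * R) := by
  obtain ⟨c, hc, hI⟩ := exists_integral_SKN_le_exp (K := K) hN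
  have hIr₀ := integral_SKN_pos (K := K) hN hr₀
  have hexp : ∀ R, 0 ≤ R → 1 ≤ exp (c * R) := fun R hR => one_le_exp (mul_nonneg hc hR)
  refine ⟨V₁ * exp (c * r₀) / ∫ u in (0 : ℝ)..r₀, SKN K N u, by positivity, c,
    fun x R hR => ?_⟩
  rcases le_total R r₀ with hRr₀ | hr₀R
  · calc ν.real (ball x R) ≤ V₁ :=
          (measureReal_mono (ball_subset_ball hRr₀) (hν x r₀)).trans (hup x)
      _ ≤ V₁ * exp (c * r₀) / ∫ u in (0 : ℝ)..r₀, SKN K N u := by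
          rw [le_div_iff₀ hIr₀]
          exact mul_le_mul_of_nonneg_left (hI r₀ hr₀.le) hV₁.le
      _ ≤ _ := le_mul_of_one_le_right (by positivity) (hexp R hR)
  · have hIR := integral_SKN_pos (K := K) hN (hr₀.trans_le hr₀R)
    calc ν.real (ball x R) ≤ V₁ * exp (c * R) / ∫ u in (0 : ℝ)..r₀, SKN K N u := by
          rw [le_div_iff₀ hIr₀]
          calc _ ≤ ν.real (ball x r₀) * ∫ u in (0 : ℝ)..R, SKN K N u :=
                hBG.measureReal_ball_mul_le hN x hr₀ hr₀R
            _ ≤ V₁ * exp (c * R) :=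
                mul_le_mul (hup x) (hI R (hr₀.le.trans hr₀R)) hIR.le hV₁.le
      _ ≤ V₁ * exp (c * R) / (∫ u in (0 : ℝ)..r₀, SKN K N u) * exp (c * r₀) :=
          le_mul_of_one_le_right (by positivity) (hexp r₀ hr₀.le)
      _ = _ := by ring

end BishopGromov

section Net

variable {X : Type*} [MetricSpace X] {𝒩 : Set X} {ε : ℝ}

lemma IsMaximalNet.exists_dist_lt (hnet : IsMaximalNet 𝒩 ε) (hε : 0 < ε) (x : X) :
    ∃ p ∈ 𝒩, dist x p < ε := by
  by_contra! hfar
  have hsep : IsSeparated (insert x 𝒩) ε := by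
    rintro p (rfl | hp) q (rfl | hq) hpq
    · exact absurd rfl hpq
    · exact hfar q hq
    · rw [dist_comm]; exact hfar p hp
    · exact hnet.1 p hp q hq hpq
  have hx : x ∈ 𝒩 := hnet.2 _ (Set.subset_insert x 𝒩) hsep ▸ Set.mem_insert x 𝒩
  linarith [hfar x hx, dist_self x]

lemma IsGeodesicSpace.exists_dist_eq (hgeo : IsGeodesicSpace X) (x y : X) {t : ℝ}
    (ht₀ : 0 ≤ t) (ht : t ≤ dist x y) : ∃ z, dist x z = t ∧ dist z y = dist x y - t := by
  obtain ⟨f, hf₀, hf₁, hiso⟩ := hgeo x y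
  have hx := hiso 0 ⟨le_rfl, dist_nonneg⟩ t ⟨ht₀, ht⟩
  have hy := hiso t ⟨ht₀, ht⟩ (dist x y) ⟨dist_nonneg, le_rfl⟩
  rw [hf₀] at hx
  rw [hf₁] at hy
  exact ⟨f t, by rw [hx, zero_sub, abs_neg, abs_of_nonneg ht₀],
    by rw [hy, abs_sub_comm, abs_of_nonneg (by linarith)]⟩

lemma IsMaximalNet.exists_mem_near_geodesic (hnet : IsMaximalNet 𝒩 ε) (hε : 0 < ε)
    (hgeo : IsGeodesicSpace X) (x y : X) {t : ℝ} (ht₀ : 0 ≤ t) (ht : t ≤ dist x y) :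
    ∃ p ∈ 𝒩, dist x p < t + ε ∧ dist p y < dist x y - t + ε := by
  obtain ⟨z, hxz, hzy⟩ := hgeo.exists_dist_eq x y ht₀ ht
  obtain ⟨p, hp, hzp⟩ := hnet.exists_dist_lt hε z
  refine ⟨p, hp, ?_, ?_⟩
  · linarith [dist_triangle x z p]
  · linarith [dist_triangle p z y, dist_comm z p]

end Net

noncomputable def graphBallCard {V : Type*} (G : SimpleGraph V) (v₀ : V) (r : ℝ) : ℝ :=
  ({v | (G.dist v₀ v : ℝ) ≤ r}.ncard : ℝ)

section NetGraph

variable {X : Type*} [MetricSpace X] {𝒩 : Set X} {ε : ℝ}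

lemma dist_le_two_mul_walk_length {p q : 𝒩} (w : (netGraph 𝒩 ε).Walk p q) :
    dist (p : X) q ≤ 2 * ε * w.length := by
  induction w with
  | nil => simp
  | @cons u v r hadj _ ih =>
    rw [SimpleGraph.Walk.length_cons, Nat.cast_succ]
    linarith [dist_triangle (u : X) v r, hadj.2]

lemma dist_le_two_mul_netGraph_dist {p q : 𝒩} (h : (netGraph 𝒩 ε).Reachable p q) :
    dist (p : X) q ≤ 2 * ε * (netGraph 𝒩 ε).dist p q := by
  obtain ⟨w, hw⟩ := h.exists_walk_length_eq_dist
  simpa [hw] using dist_le_two_mul_walk_length w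

/- Greedy walk: step to a net point near the point at distance `ε` from `p` on a geodesic to `q`.
The new point is strictly closer to `q`, so `p` leaves the ball around `q` and the number of net
points in that ball drops. -/
lemma exists_walk_length_le_ncard (hgeo : IsGeodesicSpace X) (hnet : IsMaximalNet 𝒩 ε)
    (hε : 0 < ε) (hfin : ∀ x R, (𝒩 ∩ closedBall x R).Finite) (p q : 𝒩) :
    ∃ w : (netGraph 𝒩 ε).Walk p q,
      w.length ≤ (𝒩 ∩ closedBall (q : X) (dist (p : X) q)).ncard := by
  obtain ⟨n, hn⟩ : ∃ n, (𝒩 ∩ closedBall (q : X) (dist (p : X) q)).ncard = n := ⟨_, rfl⟩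
  induction n using Nat.strong_induction_on generalizing p with
  | _ n ih =>
    by_cases hpq : p = q
    · subst hpq; exact ⟨.nil, by simp⟩
    by_cases hclose : dist (p : X) q < 2 * ε
    · refine ⟨.cons (show (netGraph 𝒩 ε).Adj p q from ⟨hpq, hclose⟩) .nil, ?_⟩
      rw [SimpleGraph.Walk.length_cons, SimpleGraph.Walk.length_nil, zero_add]
      exact (Set.ncard_pos (hfin _ _)).2 ⟨q, q.2, mem_closedBall_self dist_nonneg⟩
    replace hclose := not_lt.1 hclose
    obtain ⟨p₁, hp₁, hpp₁, hp₁q⟩ :=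
      hnet.exists_mem_near_geodesic hε hgeo p q hε.le (by linarith)
    have hlt : (𝒩 ∩ closedBall (q : X) (dist p₁ q)).ncard < n := by
      refine hn ▸ Set.ncard_lt_ncard ⟨Set.inter_subset_inter_right _
        (closedBall_subset_closedBall (by linarith)), fun hsub => ?_⟩ (hfin _ _)
      have := (hsub ⟨p.2, mem_closedBall.2 le_rfl⟩).2
      rw [mem_closedBall] at this
      linarith
    obtain ⟨w, hw⟩ : ∃ w : (netGraph 𝒩 ε).Walk ⟨p₁, hp₁⟩ q,
        w.length ≤ (𝒩 ∩ closedBall (q : X) (dist p₁ q)).ncard := ih _ hlt ⟨p₁, hp₁⟩ rfl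
    have hadj : (netGraph 𝒩 ε).Adj p ⟨p₁, hp₁⟩ :=
      ⟨fun h => by subst h; simp at hpp₁; linarith, by simp only; linarith⟩
    exact ⟨.cons hadj w, by rw [SimpleGraph.Walk.length_cons]; omega⟩

lemma netGraph_preconnected (hgeo : IsGeodesicSpace X) (hnet : IsMaximalNet 𝒩 ε) (hε : 0 < ε)
    (hfin : ∀ x R, (𝒩 ∩ closedBall x R).Finite) : (netGraph 𝒩 ε).Preconnected := fun p q =>
  (exists_walk_length_le_ncard hgeo hnet hε hfin p q).elim fun w _ => ⟨w⟩

lemma exists_walk_length_le_of_dist_le_three_mul (hgeo : IsGeodesicSpace X)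
    (hnet : IsMaximalNet 𝒩 ε) (hε : 0 < ε) (hfin : ∀ x R, (𝒩 ∩ closedBall x R).Finite) {M : ℕ}
    (hM : ∀ z : X, (𝒩 ∩ closedBall z (3 * ε)).ncard ≤ M) {p q : 𝒩}
    (hpq : dist (p : X) q ≤ 3 * ε) : ∃ w : (netGraph 𝒩 ε).Walk p q, w.length ≤ M := by
  obtain ⟨w, hw⟩ := exists_walk_length_le_ncard hgeo hnet hε hfin p q
  exact ⟨w, hw.trans ((Set.ncard_le_ncard (Set.inter_subset_inter_right _
    (closedBall_subset_closedBall hpq)) (hfin _ _)).trans (hM q))⟩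

/- Cut the geodesic from `p` to `q` at distance `2ε` before `q`: a net point near the cut is reached
by induction, and it lies within `3ε` of `q`. -/
lemma exists_walk_length_le_of_dist_le (hgeo : IsGeodesicSpace X) (hnet : IsMaximalNet 𝒩 ε)
    (hε : 0 < ε) (hfin : ∀ x R, (𝒩 ∩ closedBall x R).Finite) {M : ℕ}
    (hM : ∀ z : X, (𝒩 ∩ closedBall z (3 * ε)).ncard ≤ M) (n : ℕ) {p q : 𝒩}
    (hpq : dist (p : X) q ≤ n * ε + 2 * ε) :
    ∃ w : (netGraph 𝒩 ε).Walk p q, w.length ≤ (n + 1) * M := by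
  induction n generalizing q with
  | zero =>
    simpa using exists_walk_length_le_of_dist_le_three_mul hgeo hnet hε hfin hM
      (by simp only [CharP.cast_eq_zero, zero_mul, zero_add] at hpq; linarith)
  | succ n ih =>
    by_cases hnear : dist (p : X) q ≤ n * ε + 2 * ε
    · obtain ⟨w, hw⟩ := ih hnear
      exact ⟨w, hw.trans (Nat.mul_le_mul_right _ (by omega))⟩
    replace hnear := not_le.1 hnear
    have hn : (0 : ℝ) ≤ n * ε := by positivity
    obtain ⟨q', hq', hpq', hq'q⟩ := hnet.exists_mem_near_geodesic hε hgeo p q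
      (t := dist (p : X) q - 2 * ε) (by linarith) (by linarith)
    push_cast at hpq
    obtain ⟨w₁, hw₁⟩ := ih (q := ⟨q', hq'⟩) (by simp only; linarith)
    obtain ⟨w₂, hw₂⟩ := exists_walk_length_le_of_dist_le_three_mul hgeo hnet hε hfin hM
      (p := ⟨q', hq'⟩) (q := q) (by simp only; linarith)
    exact ⟨w₁.append w₂, by rw [SimpleGraph.Walk.length_append]; linarith⟩

lemma exists_walk_length_le_mul_dist (hgeo : IsGeodesicSpace X) (hnet : IsMaximalNet 𝒩 ε)
    (hε : 0 < ε) (hfin : ∀ x R, (𝒩 ∩ closedBall x R).Finite) {M : ℕ}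
    (hM : ∀ z : X, (𝒩 ∩ closedBall z (3 * ε)).ncard ≤ M) (p q : 𝒩) :
    ∃ w : (netGraph 𝒩 ε).Walk p q, (w.length : ℝ) ≤ M * (dist (p : X) q / ε + 2) := by
  set n := ⌈dist (p : X) q / ε⌉₊
  have hn : dist (p : X) q / ε ≤ n := Nat.le_ceil _
  have hn' : (n : ℝ) < dist (p : X) q / ε + 1 := Nat.ceil_lt_add_one (by positivity)
  obtain ⟨w, hw⟩ := exists_walk_length_le_of_dist_le hgeo hnet hε hfin hM n (p := p) (q := q)
    (by rw [div_le_iff₀ hε] at hn; linarith)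
  refine ⟨w, ?_⟩
  calc (w.length : ℝ) ≤ (n + 1) * M := by exact_mod_cast hw
    _ ≤ M * (dist (p : X) q / ε + 2) := by nlinarith [(Nat.cast_nonneg M : (0 : ℝ) ≤ M)]

lemma image_netGraph_ball_subset (hε : 0 ≤ ε) (hconn : (netGraph 𝒩 ε).Preconnected) (x₀ : X)
    (p₀ : 𝒩) (r : ℝ) :
    Subtype.val '' {v | ((netGraph 𝒩 ε).dist p₀ v : ℝ) ≤ r} ⊆
      𝒩 ∩ closedBall x₀ (dist x₀ p₀ + 2 * ε * r) := by
  rintro _ ⟨v, hv, rfl⟩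
  refine ⟨v.2, mem_closedBall.2 ?_⟩
  have hv : ((netGraph 𝒩 ε).dist p₀ v : ℝ) ≤ r := hv
  linarith [dist_le_two_mul_netGraph_dist (hconn p₀ v), dist_triangle (v : X) p₀ x₀,
    dist_comm (v : X) p₀, dist_comm (p₀ : X) x₀,
    mul_le_mul_of_nonneg_left hv (by positivity : 0 ≤ 2 * ε)]

lemma one_le_graphBallCard (hε : 0 ≤ ε) (hconn : (netGraph 𝒩 ε).Preconnected)
    (hfin : ∀ x R, (𝒩 ∩ closedBall x R).Finite) (p₀ : 𝒩) {r : ℝ} (hr : 0 ≤ r) :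
    1 ≤ graphBallCard (netGraph 𝒩 ε) p₀ r := by
  have hball_fin := ((hfin p₀ _).subset (image_netGraph_ball_subset hε hconn p₀ p₀ r)
    ).of_finite_image Subtype.val_injective.injOn
  rw [graphBallCard, Nat.one_le_cast]
  exact (Set.ncard_pos hball_fin).2 ⟨p₀, by simpa using hr⟩

end NetGraph

section Counting

variable {X : Type*} [MetricSpace X] [MeasurableSpace X] {ν : Measure X} {𝒩 : Set X} {ε : ℝ}

lemma IsSeparated.ncard_mul_le_measureReal [OpensMeasurableSpace X] (h𝒩 : IsSeparated 𝒩 ε)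
    (hν : ∀ x r, ν (ball x r) ≠ ⊤) {v : ℝ} (hv : ∀ p, v ≤ ν.real (ball p (ε / 2))) {x : X}
    {R : ℝ} {S : Set X} (hS : S ⊆ 𝒩 ∩ closedBall x R) : S.ncard * v ≤ ν.real (ball x (R + ε / 2)) := by
  rcases S.finite_or_infinite with hSfin | hSinf
  · obtain ⟨T, rfl⟩ := hSfin.exists_finset_coe
    have hdisj : (T : Set X).PairwiseDisjoint (fun p => ball p (ε / 2)) := fun p hp q hq hpq =>
      ball_disjoint_ball (by linarith [h𝒩 p (hS hp).1 q (hS hq).1 hpq])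
    calc ((T : Set X).ncard : ℝ) * v = ∑ _p ∈ T, v := by simp
      _ ≤ ∑ p ∈ T, ν.real (ball p (ε / 2)) := Finset.sum_le_sum fun p _ => hv p
      _ = ν.real (⋃ p ∈ T, ball p (ε / 2)) :=
        (measureReal_biUnion_finset hdisj (fun _ _ => measurableSet_ball) fun p _ => hν p _).symm
      _ ≤ ν.real (ball x (R + ε / 2)) := measureReal_mono (Set.iUnion₂_subset fun p hp =>
          ball_subset_ball' (by linarith [mem_closedBall.1 (hS hp).2])) (hν _ _)
  · rw [hSinf.ncard, Nat.cast_zero, zero_mul]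
    exact measureReal_nonneg

lemma IsSeparated.finite_inter_closedBall [OpensMeasurableSpace X] (h𝒩 : IsSeparated 𝒩 ε)
    (hν : ∀ x r, ν (ball x r) ≠ ⊤) {v : ℝ} (hv₀ : 0 < v) (hv : ∀ p, v ≤ ν.real (ball p (ε / 2)))
    (x : X) (R : ℝ) :
    (𝒩 ∩ closedBall x R).Finite := by
  by_contra hinf
  obtain ⟨T, hT, hcard⟩ :=
    Set.Infinite.exists_subset_card_eq hinf (⌈ν.real (ball x (R + ε / 2)) / v⌉₊ + 1)
  have h := h𝒩.ncard_mul_le_measureReal hν hv hT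
  rw [Set.ncard_coe_finset, hcard, ← le_div_iff₀ hv₀] at h
  push_cast at h
  linarith [Nat.le_ceil (ν.real (ball x (R + ε / 2)) / v)]

lemma IsMaximalNet.measureReal_ball_le_ncard_mul (hnet : IsMaximalNet 𝒩 ε) (hε : 0 < ε)
    (hν : ∀ x r, ν (ball x r) ≠ ⊤) {A : ℝ} (hA : ∀ p, ν.real (ball p ε) ≤ A) (x : X) (r : ℝ)
    (hfin : (𝒩 ∩ closedBall x (r + ε)).Finite) :
    ν.real (ball x r) ≤ (𝒩 ∩ closedBall x (r + ε)).ncard * A := by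
  obtain ⟨T, hT⟩ := hfin.exists_finset_coe
  have hcover : ball x r ⊆ ⋃ p ∈ T, ball p ε := by
    intro z hz
    obtain ⟨p, hp, hzp⟩ := hnet.exists_dist_lt hε z
    have hpT : p ∈ (T : Set X) := hT ▸ ⟨hp, mem_closedBall.2
      (by linarith [dist_triangle p z x, dist_comm z p, mem_ball.1 hz])⟩
    exact Set.mem_biUnion hpT (mem_ball.2 hzp)
  rw [← hT, Set.ncard_coe_finset]
  calc ν.real (ball x r) ≤ ν.real (⋃ p ∈ T, ball p ε) :=
        measureReal_mono hcover
          (measure_biUnion_lt_top T.finite_toSet fun p _ => (hν p ε).lt_top).ne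
    _ ≤ ∑ p ∈ T, ν.real (ball p ε) := measureReal_biUnion_finset_le _ _
    _ ≤ ∑ _p ∈ T, A := Finset.sum_le_sum fun p _ => hA p
    _ = T.card * A := by simp

lemma graphBallCard_mul_le_measureReal [OpensMeasurableSpace X] (h𝒩 : IsSeparated 𝒩 ε) (hε : 0 ≤ ε)
    (hconn : (netGraph 𝒩 ε).Preconnected) (hν : ∀ x r, ν (ball x r) ≠ ⊤) {v : ℝ}
    (hv : ∀ p, v ≤ ν.real (ball p (ε / 2))) (x₀ : X) (p₀ : 𝒩) (r : ℝ) :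
    graphBallCard (netGraph 𝒩 ε) p₀ r * v ≤
      ν.real (ball x₀ (2 * ε * r + (dist x₀ p₀ + ε / 2))) := by
  have h := h𝒩.ncard_mul_le_measureReal hν hv (image_netGraph_ball_subset hε hconn x₀ p₀ r)
  rw [Set.ncard_image_of_injective _ Subtype.val_injective] at h
  rwa [show 2 * ε * r + (dist x₀ p₀ + ε / 2) = dist x₀ p₀ + 2 * ε * r + ε / 2 by ring]

lemma measureReal_ball_le_mul_graphBallCard (hgeo : IsGeodesicSpace X) (hnet : IsMaximalNet 𝒩 ε)
    (hε : 0 < ε) (hν : ∀ x r, ν (ball x r) ≠ ⊤) (hfin : ∀ x R, (𝒩 ∩ closedBall x R).Finite)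
    {M : ℕ} (hM : ∀ z : X, (𝒩 ∩ closedBall z (3 * ε)).ncard ≤ M) {A : ℝ}
    (hA : ∀ p, ν.real (ball p ε) ≤ A) (x₀ : X) (p₀ : 𝒩) (r : ℝ) :
    ν.real (ball x₀ r) ≤
      A * graphBallCard (netGraph 𝒩 ε) p₀ (M / ε * r + M * ((dist x₀ p₀ + ε) / ε + 2)) := by
  set ρ := M / ε * r + M * ((dist x₀ p₀ + ε) / ε + 2)
  have hsub : 𝒩 ∩ closedBall x₀ (r + ε) ⊆
      Subtype.val '' {v | ((netGraph 𝒩 ε).dist p₀ v : ℝ) ≤ ρ} := by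
    rintro z ⟨hz, hzx⟩
    refine ⟨⟨z, hz⟩, ?_, rfl⟩
    obtain ⟨w, hw⟩ := exists_walk_length_le_mul_dist hgeo hnet hε hfin hM p₀ ⟨z, hz⟩
    have hd : dist (p₀ : X) z ≤ dist x₀ p₀ + (r + ε) := by
      linarith [dist_triangle (p₀ : X) x₀ z, dist_comm (p₀ : X) x₀, dist_comm z x₀,
        mem_closedBall.1 hzx]
    calc ((netGraph 𝒩 ε).dist p₀ ⟨z, hz⟩ : ℝ) ≤ w.length := by
          exact_mod_cast SimpleGraph.dist_le w
      _ ≤ M * (dist (p₀ : X) z / ε + 2) := hw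
      _ ≤ M * ((dist x₀ p₀ + (r + ε)) / ε + 2) := by gcongr
      _ = ρ := by ring
  have himg_fin := (hfin x₀ _).subset (image_netGraph_ball_subset hε.le
    (netGraph_preconnected hgeo hnet hε hfin) x₀ p₀ ρ)
  have hA₀ : 0 ≤ A := measureReal_nonneg.trans (hA x₀)
  calc ν.real (ball x₀ r) ≤ (𝒩 ∩ closedBall x₀ (r + ε)).ncard * A :=
        hnet.measureReal_ball_le_ncard_mul hε hν hA x₀ r (hfin _ _)
    _ ≤ (Subtype.val '' {v | ((netGraph 𝒩 ε).dist p₀ v : ℝ) ≤ ρ}).ncard * A := by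
        gcongr
    _ = A * graphBallCard (netGraph 𝒩 ε) p₀ ρ := by
        rw [Set.ncard_image_of_injective _ Subtype.val_injective, mul_comm, graphBallCard]

end Counting

section GrowthRate

def EventuallyLeExp (f : ℝ → ℝ) : Prop := ∃ C, ∀ᶠ r in atTop, f r ≤ exp (C * r)

def FrequentlyExpLe (f : ℝ → ℝ) : Prop := ∃ c > 0, ∃ᶠ r in atTop, exp (c * r) ≤ f r

variable {f g : ℝ → ℝ} {A a b : ℝ}

lemma tendsto_affine_atTop (ha : 0 < a) : Tendsto (fun r => a * r + b) atTop atTop :=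
  tendsto_atTop_add_const_right _ b (tendsto_id.const_mul_atTop ha)

lemma EventuallyLeExp.of_le_comp (hf : EventuallyLeExp f) (hA : 0 < A) (ha : 0 < a)
    (hgf : ∀ᶠ r in atTop, g r ≤ A * f (a * r + b)) : EventuallyLeExp g := by
  obtain ⟨C, hC⟩ := hf
  refine ⟨C * a + |log A + C * b|, ?_⟩
  filter_upwards [hgf, (tendsto_affine_atTop ha).eventually hC, eventually_ge_atTop 1]
    with r hgr hfr hr
  calc g r ≤ A * exp (C * (a * r + b)) := hgr.trans (by gcongr)
    _ = exp (C * a * r + (log A + C * b)) := by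
        rw [show C * a * r + (log A + C * b) = log A + C * (a * r + b) by ring, exp_add, exp_log hA]
    _ ≤ exp ((C * a + |log A + C * b|) * r) := exp_le_exp.2 (by
        nlinarith [le_abs_self (log A + C * b),
          mul_le_mul_of_nonneg_left hr (abs_nonneg (log A + C * b))])

lemma FrequentlyExpLe.of_le_comp (hf : FrequentlyExpLe f) (hA : 0 < A) (ha : 0 < a)
    (hfg : ∀ᶠ r in atTop, f r ≤ A * g (a * r + b)) : FrequentlyExpLe g := by
  obtain ⟨c, hc, hfr⟩ := hf
  refine ⟨c / (2 * a), by positivity, (tendsto_affine_atTop (b := b) ha).frequently ?_⟩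
  refine (hfr.and_eventually (hfg.and (eventually_ge_atTop (b / a + 2 * log A / c)))).mono ?_
  rintro r ⟨hexp, hfgr, hr⟩
  have hkey : c / (2 * a) * (a * r + b) + log A ≤ c * r := by
    have h1 : c / (2 * a) * (a * r + b) = c / 2 * r + c / (2 * a) * b := by field_simp
    have h2 : c / 2 * (b / a + 2 * log A / c) = c / (2 * a) * b + log A := by field_simp
    nlinarith [mul_le_mul_of_nonneg_left hr (by positivity : 0 ≤ c / 2)]
  rw [← mul_le_mul_iff_right₀ hA]
  calc A * exp (c / (2 * a) * (a * r + b)) = exp (c / (2 * a) * (a * r + b) + log A) := by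
        rw [exp_add, exp_log hA, mul_comm]
    _ ≤ exp (c * r) := exp_le_exp.2 hkey
    _ ≤ A * g (a * r + b) := hexp.trans hfgr

lemma limsup_log_div_pos_iff {c₀ : ℝ} (hc₀ : 0 < c₀) (hlow : ∀ᶠ r in atTop, c₀ ≤ f r)
    (hup : EventuallyLeExp f) :
    0 < limsup (fun r => log (f r) / r) atTop ↔ FrequentlyExpLe f := by
  have hpos : ∀ᶠ r in atTop, 0 < f r := hlow.mono fun r h => hc₀.trans_le h
  constructor
  · intro hL
    have hcob : IsCoboundedUnder (· ≤ ·) atTop (fun r => log (f r) / r) := by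
      refine IsBoundedUnder.isCoboundedUnder_le (isBoundedUnder_of_eventually_ge
        (a := -|log c₀|) ?_)
      filter_upwards [hlow, eventually_ge_atTop 1] with r hr h1
      rw [le_div_iff₀ (by linarith)]
      nlinarith [log_le_log hc₀ hr, neg_abs_le (log c₀),
        mul_le_mul_of_nonneg_left h1 (abs_nonneg (log c₀))]
    refine ⟨_, half_pos hL, ((frequently_lt_of_lt_limsup hcob (half_lt_self hL)).and_eventually
      (hpos.and (eventually_gt_atTop 0))).mono fun r ⟨h, hfr, hr⟩ => ?_⟩
    exact ((lt_log_iff_exp_lt hfr).1 ((lt_div_iff₀ hr).1 h)).le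
  · rintro ⟨c, hc, hfr⟩
    obtain ⟨C, hC⟩ := hup
    have hbdd : IsBoundedUnder (· ≤ ·) atTop (fun r => log (f r) / r) :=
      isBoundedUnder_of_eventually_le (a := C) (by
        filter_upwards [hC, hpos, eventually_gt_atTop 0] with r h hf hr
        rw [div_le_iff₀ hr]
        exact (log_le_iff_le_exp hf).2 h)
    refine hc.trans_le (le_limsup_of_frequently_le ((hfr.and_eventually
      (eventually_gt_atTop 0)).mono fun r ⟨h, hr⟩ => ?_) hbdd)
    rw [le_div_iff₀ hr]
    exact (le_log_iff_exp_le ((exp_pos _).trans_le h)).2 h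

end GrowthRate

theorem volumeExpGrowth_iff_graphExpGrowth {X : Type*} [MetricSpace X] [MeasurableSpace X]
    [OpensMeasurableSpace X] (hgeo : IsGeodesicSpace X) {ν : Measure X}
    (hν : ∀ x r, ν (ball x r) ≠ ⊤) (hlow : ∀ s > 0, ∃ v > 0, ∀ x, v ≤ ν.real (ball x s))
    (hup : ∃ C > 0, ∃ c, ∀ x R, 0 ≤ R → ν.real (ball x R) ≤ C * exp (c * R))
    {𝒩 : Set X} {ε : ℝ} (hε : 0 < ε) (hnet : IsMaximalNet 𝒩 ε) (x₀ : X) (p₀ : 𝒩) :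
    VolumeExpGrowth ν x₀ ↔ GraphExpGrowth (netGraph 𝒩 ε) p₀ := by
  obtain ⟨v, hv, hvν⟩ := hlow (ε / 2) (half_pos hε)
  obtain ⟨C, hC, c, hCν⟩ := hup
  have hfin := hnet.1.finite_inter_closedBall hν hv hvν
  have hconn := netGraph_preconnected hgeo hnet hε hfin
  -- the `+ 1` keeps the slope `M / ε` of the radius comparison positive
  set M := ⌈C * exp (c * (3 * ε + ε / 2)) / v⌉₊ + 1
  have hM : ∀ z : X, (𝒩 ∩ closedBall z (3 * ε)).ncard ≤ M := fun z => by
    have h := (hnet.1.ncard_mul_le_measureReal hν hvν subset_rfl).trans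
      (hCν z (3 * ε + ε / 2) (by positivity))
    have := ((le_div_iff₀ hv).2 h).trans (Nat.le_ceil _)
    exact Nat.le_succ_of_le (by exact_mod_cast this)
  set F := fun r => ν.real (ball x₀ r)
  set G := graphBallCard (netGraph 𝒩 ε) p₀
  have hFG := measureReal_ball_le_mul_graphBallCard hgeo hnet hε hν hfin hM
    (fun p => hCν p ε hε.le) x₀ p₀
  have hGF : ∀ r, G r ≤ v⁻¹ * F (2 * ε * r + (dist x₀ p₀ + ε / 2)) := fun r => by
    rw [← div_eq_inv_mul, le_div_iff₀ hv]
    exact graphBallCard_mul_le_measureReal hnet.1 hε.le hconn hν hvν x₀ p₀ r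
  have hF : EventuallyLeExp F := EventuallyLeExp.of_le_comp (f := fun r => exp (c * r)) (b := 0)
    ⟨c, .of_forall fun _ => le_rfl⟩ hC one_pos
    ((eventually_ge_atTop 0).mono fun r hr => by simpa using hCν x₀ r hr)
  have hG : EventuallyLeExp G := hF.of_le_comp (inv_pos.2 hv) (by positivity) (.of_forall hGF)
  have hFlow : ∀ᶠ r in atTop, v ≤ F r := (eventually_ge_atTop (ε / 2)).mono fun r hr =>
    (hvν x₀).trans (measureReal_mono (ball_subset_ball hr) (hν x₀ r))
  have hGlow : ∀ᶠ r in atTop, 1 ≤ G r := (eventually_ge_atTop 0).mono fun r hr =>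
    one_le_graphBallCard hε.le hconn hfin p₀ hr
  calc VolumeExpGrowth ν x₀ ↔ FrequentlyExpLe F := limsup_log_div_pos_iff hv hFlow hF
    _ ↔ FrequentlyExpLe G :=
      ⟨fun h => h.of_le_comp (by positivity) (by positivity) (.of_forall hFG),
        fun h => h.of_le_comp (inv_pos.2 hv) (by positivity) (.of_forall hGF)⟩
    _ ↔ GraphExpGrowth (netGraph 𝒩 ε) p₀ := (limsup_log_div_pos_iff one_pos hGlow hG).symm

theorem stmt_14_general {X : Type*} [MetricSpace X]
    [MeasurableSpace X] [BorelSpace X]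
    (hgeo : IsGeodesicSpace X)
    (ν : Measure X)
    (hbdd : ∀ s : Set X, Bornology.IsBounded s → ν s < ⊤)
    (K N : ℝ) (hN : 1 < N)
    (hBG : BishopGromov ν K N)
    (r₀ V₀ V₁ : ℝ) (hr₀ : 0 < r₀) (hV₀ : 0 < V₀)
    (hnc : ∀ x : X, V₀ ≤ (ν (ball x r₀)).toReal ∧ (ν (ball x r₀)).toReal ≤ V₁)
    (ε : ℝ) (hε : 0 < ε) (𝒩 : Set X) (hnet : IsMaximalNet 𝒩 ε)
    (x₀ : X) (p₀ : 𝒩) :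
    VolumeExpGrowth ν x₀ ↔ GraphExpGrowth (netGraph 𝒩 ε) p₀ := by
  have hν : ∀ x r, ν (ball x r) ≠ ⊤ := fun x r => (hbdd _ isBounded_ball).ne
  have hV₁ : 0 < V₁ := hV₀.trans_le ((hnc x₀).1.trans (hnc x₀).2)
  exact volumeExpGrowth_iff_graphExpGrowth hgeo hν
    (fun s hs => hBG.exists_pos_le_measureReal_ball hN hν hr₀ hV₀ (fun x => (hnc x).1) hs)
    (hBG.exists_measureReal_ball_le_exp hN hν hr₀ hV₁ fun x => (hnc x).2) hε hnet x₀ p₀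

theorem stmt_14 {X : Type*} [MetricSpace X] [ProperSpace X]
    [MeasurableSpace X] [BorelSpace X]
    (hgeo : IsGeodesicSpace X)
    (ν : Measure X)
    (hfull : ∀ x : X, ∀ r > (0:ℝ), 0 < ν (ball x r))
    (hbdd : ∀ s : Set X, Bornology.IsBounded s → ν s < ⊤)
    (K N : ℝ) (hK : K ≤ 0) (hN : 1 < N)
    (hBG : BishopGromov ν K N)
    (r₀ V₀ V₁ : ℝ) (hr₀ : 0 < r₀) (hV₀ : 0 < V₀) (hV₁ : 0 < V₁)
    (hnc : ∀ x : X, V₀ ≤ (ν (ball x r₀)).toReal ∧ (ν (ball x r₀)).toReal ≤ V₁)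
    (ε : ℝ) (hε : 0 < ε) (𝒩 : Set X) (hnet : IsMaximalNet 𝒩 ε)
    (x₀ : X) (p₀ : 𝒩) :
    VolumeExpGrowth ν x₀ ↔ GraphExpGrowth (netGraph 𝒩 ε) p₀ :=
  stmt_14_general hgeo ν hbdd K N hN hBG r₀ V₀ V₁ hr₀ hV₀ hnc ε hε 𝒩 hnet x₀ p₀
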